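/- Let d ≥ K ≥ 1, n ≥ 1, λ_W > 0, λ_H > 0. Let H̄ = U·S·Vᵀ ∈ ℝ^{d×K}, where U ∈ ℝ^{d×K} satisfies UᵀU = I_K, V ∈ ℝ^{K×K} is orthogonal, and S = diag(s₁, …, s_K) with s_k ≥ 0. Define W := H̄ᵀ·(H̄H̄ᵀ + Kλ_W·I_d)^{−1}. Then (1/(2K))‖W·H̄ − I_K‖_F² + (λ_W/2)‖W‖_F² + (nλ_H/2)‖H̄‖_F² = Σ_{k=1}^K ( λ_W/(2(s_k² + Kλ_W)) + (nλ_H/2)·s_k² ). -/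

import Mathlib

/-!
Every matrix in the objective is diagonalised by the SVD `H̄ = U diag(s) Vᵀ`. Writing
`a = Kλ_W`, the matrix `W₀ = V diag(s/(s² + a)) Uᵀ` satisfies `W₀ (H̄H̄ᵀ + a I) = H̄ᵀ`, and
`H̄H̄ᵀ + a I` is positive definite, so `W = W₀`. Then `WH̄ − I = V diag(−a/(s² + a)) Vᵀ`.
As `U` and `V` have orthonormal columns, the Frobenius norm of `P diag(f) Qᵀ` is `‖f‖₂`, so
the objective splits into `K` scalar terms, each of which simplifies to
`λ_W/(2(s² + a)) + (nλ_H/2) s²`.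
-/

open Matrix Finset

noncomputable section

/-- Squared Frobenius norm of a real matrix. -/
def frobSq {m n : Type*} [Fintype m] [Fintype n] (A : Matrix m n ℝ) : ℝ :=
  ∑ i, ∑ j, (A i j) ^ 2

section SandwichedDiagonal

variable {R : Type*} [CommRing R] {m n p ι : Type*} [Fintype ι] [DecidableEq ι]

theorem transpose_mul_diagonal_mul_transpose (P : Matrix m ι R) (f : ι → R)
    (Q : Matrix n ι R) : (P * diagonal f * Qᵀ)ᵀ = Q * diagonal f * Pᵀ := by
  simp only [transpose_mul, transpose_transpose, diagonal_transpose, Matrix.mul_assoc]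

theorem mul_diagonal_mul_transpose_mul_of_transpose_mul_self [Fintype n] {Q : Matrix n ι R}
    (hQ : Qᵀ * Q = 1) (P : Matrix m ι R) (f g : ι → R) (S : Matrix p ι R) :
    P * diagonal f * Qᵀ * (Q * diagonal g * Sᵀ) = P * diagonal (f * g) * Sᵀ := by
  calc P * diagonal f * Qᵀ * (Q * diagonal g * Sᵀ)
      = P * diagonal f * (Qᵀ * Q) * diagonal g * Sᵀ := by simp only [Matrix.mul_assoc]
    _ = P * diagonal (f * g) * Sᵀ := by
      rw [hQ, Matrix.mul_one, Matrix.mul_assoc P, diagonal_mul_diagonal]; rfl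

theorem mul_diagonal_mul_transpose_add (P : Matrix m ι R) (f g : ι → R) (Q : Matrix n ι R) :
    P * diagonal f * Qᵀ + P * diagonal g * Qᵀ = P * diagonal (f + g) * Qᵀ := by
  rw [← Matrix.add_mul, ← Matrix.mul_add, diagonal_add]; rfl

theorem smul_mul_diagonal_mul_transpose (c : R) (P : Matrix m ι R) (f : ι → R)
    (Q : Matrix n ι R) : c • (P * diagonal f * Qᵀ) = P * diagonal (c • f) * Qᵀ := by
  rw [diagonal_smul, Matrix.mul_smul, Matrix.smul_mul]

theorem mul_diagonal_mul_transpose_sub_mul_transpose (P : Matrix m ι R) (f : ι → R)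
    (Q : Matrix n ι R) : P * diagonal f * Qᵀ - P * Qᵀ = P * diagonal (f - 1) * Qᵀ := by
  have hdiag : diagonal (f - 1) = diagonal f - 1 := by
    rw [← diagonal_one]
    exact (diagonal_sub f 1).symm
  rw [hdiag, Matrix.mul_sub, Matrix.sub_mul, Matrix.mul_one]

end SandwichedDiagonal

theorem frobSq_eq_trace {m n : Type*} [Fintype m] [Fintype n] (A : Matrix m n ℝ) :
    frobSq A = trace (Aᵀ * A) := by
  simp only [frobSq, trace, Matrix.diag, mul_apply, transpose_apply, sq]
  exact Finset.sum_comm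

theorem frobSq_mul_diagonal_mul_transpose {m n ι : Type*} [Fintype m] [Fintype n] [Fintype ι]
    [DecidableEq ι] {P : Matrix m ι ℝ} (hP : Pᵀ * P = 1) {Q : Matrix n ι ℝ} (hQ : Qᵀ * Q = 1)
    (f : ι → ℝ) : frobSq (P * diagonal f * Qᵀ) = ∑ k, f k ^ 2 := by
  rw [frobSq_eq_trace, transpose_mul_diagonal_mul_transpose,
    mul_diagonal_mul_transpose_mul_of_transpose_mul_self hP, trace_mul_cycle, hQ,
    Matrix.one_mul, trace_diagonal]
  simp only [Pi.mul_apply, sq]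

theorem transpose_mul_inv_add_smul_one_of_svd {m ι : Type*} [Fintype m] [DecidableEq m]
    [Fintype ι] [DecidableEq ι] {U : Matrix m ι ℝ} (hU : Uᵀ * U = 1) {V : Matrix ι ι ℝ}
    (hV : Vᵀ * V = 1) {s : ι → ℝ} {H : Matrix m ι ℝ} (hH : H = U * diagonal s * Vᵀ) {a : ℝ}
    (ha : 0 < a) :
    Hᵀ * (H * Hᵀ + a • 1)⁻¹ = V * diagonal (fun k => s k / (s k ^ 2 + a)) * Uᵀ := by
  have hM : IsUnit (H * Hᵀ + a • 1).det := by
    have hpos := PosDef.posSemidef_add (posSemidef_self_mul_conjTranspose H) (PosDef.one.smul ha)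
    rw [conjTranspose_eq_transpose_of_trivial] at hpos
    exact (isUnit_iff_isUnit_det _).mp hpos.isUnit
  suffices h : V * diagonal (fun k => s k / (s k ^ 2 + a)) * Uᵀ * (H * Hᵀ + a • 1) = Hᵀ by
    calc Hᵀ * (H * Hᵀ + a • 1)⁻¹
        = V * diagonal (fun k => s k / (s k ^ 2 + a)) * Uᵀ * (H * Hᵀ + a • 1)
            * (H * Hᵀ + a • 1)⁻¹ := by rw [h]
      _ = V * diagonal (fun k => s k / (s k ^ 2 + a)) * Uᵀ :=
        mul_nonsing_inv_cancel_right _ _ hM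
  have hsa : ∀ k, s k ^ 2 + a ≠ 0 := fun k => by positivity
  rw [hH, transpose_mul_diagonal_mul_transpose,
    mul_diagonal_mul_transpose_mul_of_transpose_mul_self hV, Matrix.mul_add, Matrix.mul_smul,
    Matrix.mul_one, mul_diagonal_mul_transpose_mul_of_transpose_mul_self hU,
    smul_mul_diagonal_mul_transpose, mul_diagonal_mul_transpose_add]
  congr 3
  ext k
  simp only [Pi.add_apply, Pi.mul_apply, Pi.smul_apply, smul_eq_mul]
  field_simp [hsa k]

theorem objective_in_terms_of_singular_values_general
    (d K : ℕ) (hK : 1 ≤ K) (n : ℕ)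
    (lW lH : ℝ) (hlW : 0 < lW)
    (U : Matrix (Fin d) (Fin K) ℝ) (hU : Uᵀ * U = 1)
    (V : Matrix (Fin K) (Fin K) ℝ) (hV : Vᵀ * V = 1)
    (s : Fin K → ℝ)
    (Hbar : Matrix (Fin d) (Fin K) ℝ)
    (hHbar : Hbar = U * Matrix.diagonal s * Vᵀ)
    (W : Matrix (Fin K) (Fin d) ℝ)
    (hW : W = Hbarᵀ * (Hbar * Hbarᵀ + ((K : ℝ) * lW) • (1 : Matrix (Fin d) (Fin d) ℝ))⁻¹) :
    1 / (2 * (K : ℝ)) * frobSq (W * Hbar - 1) + lW / 2 * frobSq W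
        + ((n : ℝ) * lH) / 2 * frobSq Hbar
      = ∑ k, (lW / (2 * ((s k) ^ 2 + (K : ℝ) * lW)) + (n : ℝ) * lH / 2 * (s k) ^ 2) := by
  set a : ℝ := K * lW
  have ha : 0 < a := mul_pos (by exact_mod_cast hK) hlW
  have hsa : ∀ k, s k ^ 2 + a ≠ 0 := fun k => by positivity
  have hWsvd : W = V * diagonal (fun k => s k / (s k ^ 2 + a)) * Uᵀ :=
    hW.trans (transpose_mul_inv_add_smul_one_of_svd hU hV hHbar ha)
  have hWH : W * Hbar - 1 = V * diagonal ((fun k => s k / (s k ^ 2 + a)) * s - 1) * Vᵀ := by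
    rw [hWsvd, hHbar, mul_diagonal_mul_transpose_mul_of_transpose_mul_self hU,
      ← mul_eq_one_comm.mp hV, mul_diagonal_mul_transpose_sub_mul_transpose]
  rw [hWH, hWsvd, hHbar, frobSq_mul_diagonal_mul_transpose hV hV,
    frobSq_mul_diagonal_mul_transpose hV hU, frobSq_mul_diagonal_mul_transpose hU hV,
    mul_sum, mul_sum, mul_sum, ← sum_add_distrib, ← sum_add_distrib]
  refine sum_congr rfl fun k _ => ?_
  simp only [Pi.sub_apply, Pi.mul_apply, Pi.one_apply]
  field_simp [hsa k]
  ring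

/-- The objective value of the bias-free UFM at `(W(H̄), H̄)`, where
`H̄ = U·diag(s)·Vᵀ` is an SVD and `W = H̄ᵀ(H̄H̄ᵀ + Kλ_W I_d)⁻¹` is the ridge-optimal
weight matrix, is a separable function of the singular values:
`(1/(2K))‖WH̄ − I_K‖_F² + (λ_W/2)‖W‖_F² + (nλ_H/2)‖H̄‖_F²
  = Σ_k ( λ_W/(2(s_k² + Kλ_W)) + (nλ_H/2)s_k² )`. -/
theorem objective_in_terms_of_singular_values
    (d K : ℕ) (hK : 1 ≤ K) (hd : K ≤ d) (n : ℕ) (hn : 1 ≤ n)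
    (lW lH : ℝ) (hlW : 0 < lW) (hlH : 0 < lH)
    (U : Matrix (Fin d) (Fin K) ℝ) (hU : Uᵀ * U = 1)
    (V : Matrix (Fin K) (Fin K) ℝ) (hV : Vᵀ * V = 1)
    (s : Fin K → ℝ) (hs : ∀ k, 0 ≤ s k)
    (Hbar : Matrix (Fin d) (Fin K) ℝ)
    (hHbar : Hbar = U * Matrix.diagonal s * Vᵀ)
    (W : Matrix (Fin K) (Fin d) ℝ)
    (hW : W = Hbarᵀ * (Hbar * Hbarᵀ + ((K : ℝ) * lW) • (1 : Matrix (Fin d) (Fin d) ℝ))⁻¹) :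
    1 / (2 * (K : ℝ)) * frobSq (W * Hbar - 1) + lW / 2 * frobSq W
        + ((n : ℝ) * lH) / 2 * frobSq Hbar
      = ∑ k, (lW / (2 * ((s k) ^ 2 + (K : ℝ) * lW)) + (n : ℝ) * lH / 2 * (s k) ^ 2) :=
  objective_in_terms_of_singular_values_general d K hK n lW lH hlW U hU V hV s Hbar hHbar W hW
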